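/- arXiv:2603.21026 — 4 statements merged into one kernel-verified Lean document; each statement's English description precedes it below -/
import Mathlib

section
/- Let g ∈ ℂ^N. If ĝ(l) ≠ 0 for all 1 ≤ l ≤ N, then for every m ≤ N the collection {T_i g : 1 ≤ i ≤ m} is linearly independent in ℂ^N. -/
open scoped ComplexConjugate BigOperators

/-- Graph Fourier transform: `(gft χ f) l = ⟨f, χ_l⟩ = ∑ n, f n * conj (χ l n)`. -/
noncomputable def gft {N : ℕ} (χ : Fin N → EuclideanSpace ℂ (Fin N))
    (f : EuclideanSpace ℂ (Fin N)) : EuclideanSpace ℂ (Fin N) :=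
  WithLp.toLp 2 (fun l => ∑ n, f n * conj (χ l n))

/-- Generalized translation: `(T_i f)(n) = √N · ∑ l, f̂(l) · conj (χ l i) · χ l n`. -/
noncomputable def gtrans {N : ℕ} (χ : Fin N → EuclideanSpace ℂ (Fin N))
    (i : Fin N) (f : EuclideanSpace ℂ (Fin N)) : EuclideanSpace ℂ (Fin N) :=
  WithLp.toLp 2 (fun n => (Real.sqrt N : ℂ) * ∑ l, gft χ f l * conj (χ l i) * χ l n)

/-!
Let `U` be the matrix whose columns are the `χ l`. Orthonormality says `Uᴴ * U = 1`, and since `U`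
is square it is invertible. Unfolding the definitions, `T_i g` is the `i`-th column of
`U * diagonal (√N • ĝ) * Uᴴ`, which is invertible because `ĝ` has no zeros. Hence all `N`
translates are linearly independent, and so is any subfamily.
-/

open Matrix

section ColumnMatrix

variable {𝕜 ι : Type*} [RCLike 𝕜]

def columnMatrix (χ : ι → EuclideanSpace 𝕜 ι) : Matrix ι ι 𝕜 :=
  of fun n l => χ l n

variable [Fintype ι] [DecidableEq ι]

theorem conjTranspose_columnMatrix_mul_self {χ : ι → EuclideanSpace 𝕜 ι}
    (hχ : Orthonormal 𝕜 χ) : (columnMatrix χ)ᴴ * columnMatrix χ = 1 := by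
  ext l l'
  simpa [columnMatrix, mul_apply, one_apply, PiLp.inner_apply, mul_comm]
    using orthonormal_iff_ite.mp hχ l l'

theorem isUnit_columnMatrix {χ : ι → EuclideanSpace 𝕜 ι} (hχ : Orthonormal 𝕜 χ) :
    IsUnit (columnMatrix χ) :=
  IsUnit.of_mul_eq_one _ (mul_eq_one_comm.mp (conjTranspose_columnMatrix_mul_self hχ))

end ColumnMatrix

theorem ofLp_gtrans {N : ℕ} (χ : Fin N → EuclideanSpace ℂ (Fin N)) (i : Fin N)
    (f : EuclideanSpace ℂ (Fin N)) :
    (gtrans χ i f).ofLp = (columnMatrix χ * diagonal (fun l => (Real.sqrt N : ℂ) * gft χ f l) *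
      (columnMatrix χ)ᴴ).col i := by
  ext n
  rw [col_apply, mul_apply]
  simp only [gtrans, columnMatrix, mul_diagonal, conjTranspose_apply,
    of_apply, RCLike.star_def, Finset.mul_sum]
  exact Finset.sum_congr rfl fun l _ => by ring

theorem linearIndependent_gtrans {N : ℕ} {χ : Fin N → EuclideanSpace ℂ (Fin N)}
    (hχ : Orthonormal ℂ χ) {g : EuclideanSpace ℂ (Fin N)} (hg : ∀ l, gft χ g l ≠ 0) :
    LinearIndependent ℂ fun i => gtrans χ i g := by
  refine .of_comp (WithLp.linearEquiv 2 ℂ _).toLinearMap ?_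
  have hcols : (WithLp.linearEquiv 2 ℂ _).toLinearMap ∘ (fun i => gtrans χ i g) =
      (columnMatrix χ * diagonal (fun l => (Real.sqrt N : ℂ) * gft χ g l) *
        (columnMatrix χ)ᴴ).col := funext (ofLp_gtrans χ · g)
  rw [hcols, linearIndependent_cols_iff_isUnit]
  have hdiag : IsUnit (diagonal fun l => (Real.sqrt N : ℂ) * gft χ g l) := by
    refine isUnit_diagonal.mpr (Pi.isUnit_iff.mpr fun l => (mul_ne_zero ?_ (hg l)).isUnit)
    exact Complex.ofReal_ne_zero.mpr (Real.sqrt_pos.mpr (Nat.cast_pos.mpr l.pos)).ne'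
  exact ((isUnit_columnMatrix hχ).mul hdiag).mul
    ((isUnit_conjTranspose _).mpr (isUnit_columnMatrix hχ))

theorem translates_linearIndependent_general {N : ℕ}
    (χ : Fin N → EuclideanSpace ℂ (Fin N)) (hχ : Orthonormal ℂ χ)
    (g : EuclideanSpace ℂ (Fin N))
    (hg : ∀ l : Fin N, gft χ g l ≠ 0) :
    ∀ m : ℕ, ∀ hm : m ≤ N,
      LinearIndependent ℂ (fun i : Fin m => gtrans χ (Fin.castLE hm i) g) :=
  fun _ hm => (linearIndependent_gtrans hχ hg).comp _ (Fin.castLE_injective hm)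

/-- If `ĝ(l) ≠ 0` for all `l`, then `{T_i g : 1 ≤ i ≤ m}` is linearly independent
for every `m ≤ N`. -/
theorem translates_linearIndependent {N : ℕ} (hN : 0 < N)
    (χ : Fin N → EuclideanSpace ℂ (Fin N)) (hχ : Orthonormal ℂ χ)
    (hspan : Submodule.span ℂ (Set.range χ) = ⊤)
    (g : EuclideanSpace ℂ (Fin N))
    (hg : ∀ l : Fin N, gft χ g l ≠ 0) :
    ∀ m : ℕ, ∀ hm : m ≤ N,
      LinearIndependent ℂ (fun i : Fin m => gtrans χ (Fin.castLE hm i) g) :=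
  translates_linearIndependent_general χ hχ g hg
end

section
/- Let g ∈ ℂ^N and m ≤ N. If the collection {T_i g : 1 ≤ i ≤ m} is linearly independent in ℂ^N, then there exist m distinct indices l_1, …, l_m in {1, …, N} such that ĝ(l_k) ≠ 0 for all k = 1, …, m. -/
open scoped ComplexConjugate BigOperators

/-! Each translate `T_i g = √N ∑_l ĝ(l) conj (χ_l(i)) χ_l` lies in the span of the `χ_l` with
`ĝ(l) ≠ 0`, so `m` independent translates force at least `m` such indices. -/

theorem Finset.exists_injective_fin_of_le_card {α : Type*} {s : Finset α} {m : ℕ}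
    (h : m ≤ s.card) : ∃ l : Fin m → α, Function.Injective l ∧ ∀ k, l k ∈ s :=
  ⟨fun k => s.equivFin.symm (Fin.castLE h k),
    Subtype.val_injective.comp (s.equivFin.symm.injective.comp (Fin.castLE_injective h)),
    fun k => (s.equivFin.symm (Fin.castLE h k)).2⟩

section GeneralizedTranslation

variable {N : ℕ} (χ : Fin N → EuclideanSpace ℂ (Fin N))

theorem gtrans_eq_sum (i : Fin N) (f : EuclideanSpace ℂ (Fin N)) :
    gtrans χ i f = ∑ l, ((Real.sqrt N : ℂ) * gft χ f l * conj (χ l i)) • χ l := by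
  ext n
  simp only [gtrans, PiLp.toLp_apply, WithLp.ofLp_sum, Finset.sum_apply, PiLp.smul_apply,
    smul_eq_mul, Finset.mul_sum]
  exact Finset.sum_congr rfl fun l _ => by ring

open Classical in
noncomputable def gftSupport (f : EuclideanSpace ℂ (Fin N)) : Finset (Fin N) :=
  Finset.univ.filter fun l => gft χ f l ≠ 0

theorem gtrans_mem_span_gftSupport (i : Fin N) (f : EuclideanSpace ℂ (Fin N)) :
    gtrans χ i f ∈ Submodule.span ℂ (χ '' gftSupport χ f) := by
  rw [gtrans_eq_sum]
  refine Submodule.sum_mem _ fun l _ => ?_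
  by_cases hl : gft χ f l = 0
  · simp [hl]
  · exact Submodule.smul_mem _ _
      (Submodule.subset_span ⟨l, by simpa [gftSupport] using hl, rfl⟩)

theorem card_le_card_gftSupport {ι : Type*} [Fintype ι] (f : EuclideanSpace ℂ (Fin N))
    (v : ι → Fin N) (hli : LinearIndependent ℂ fun i => gtrans χ (v i) f) :
    Fintype.card ι ≤ (gftSupport χ f).card := by
  classical
  have hspan : Set.range (fun i => gtrans χ (v i) f) ≤
      Submodule.span ℂ ((gftSupport χ f).image χ : Set (EuclideanSpace ℂ (Fin N))) := by
    rintro _ ⟨i, rfl⟩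
    simpa using gtrans_mem_span_gftSupport χ (v i) f
  calc Fintype.card ι ≤ ((gftSupport χ f).image χ).card := by
        simpa using linearIndependent_le_span_aux' _ hli _ hspan
    _ ≤ (gftSupport χ f).card := Finset.card_image_le

end GeneralizedTranslation

theorem translates_linearIndependent_necessary_general {N : ℕ}
    (χ : Fin N → EuclideanSpace ℂ (Fin N))
    (g : EuclideanSpace ℂ (Fin N)) (m : ℕ) (hm : m ≤ N)
    (hli : LinearIndependent ℂ (fun i : Fin m => gtrans χ (Fin.castLE hm i) g)) :
    ∃ l : Fin m → Fin N, Function.Injective l ∧ ∀ k : Fin m, gft χ g (l k) ≠ 0 := by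
  have hcard : m ≤ (gftSupport χ g).card := by
    simpa using card_le_card_gftSupport χ g _ hli
  obtain ⟨l, hl_inj, hl_mem⟩ := Finset.exists_injective_fin_of_le_card hcard
  exact ⟨l, hl_inj, fun k => by simpa [gftSupport] using hl_mem k⟩

/-- If `{T_i g : 1 ≤ i ≤ m}` is linearly independent, then there exist `m` distinct
indices `l_1, …, l_m` with `ĝ(l_k) ≠ 0`. -/
theorem translates_linearIndependent_necessary {N : ℕ} (hN : 0 < N)
    (χ : Fin N → EuclideanSpace ℂ (Fin N)) (hχ : Orthonormal ℂ χ)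
    (hspan : Submodule.span ℂ (Set.range χ) = ⊤)
    (g : EuclideanSpace ℂ (Fin N)) (m : ℕ) (hm : m ≤ N)
    (hli : LinearIndependent ℂ (fun i : Fin m => gtrans χ (Fin.castLE hm i) g)) :
    ∃ l : Fin m → Fin N, Function.Injective l ∧ ∀ k : Fin m, gft χ g (l k) ≠ 0 :=
  translates_linearIndependent_necessary_general χ g m hm hli
end

section
/- Let g_1, …, g_M ∈ ℂ^N and A, B > 0. The family {T_i g_s : 1 ≤ i ≤ N, 1 ≤ s ≤ M} is a frame for ℂ^N with frame bounds A and B if and only if A/N ≤ Σ_{s=1}^M |ĝ_s(l)|² ≤ B/N for all 1 ≤ l ≤ N. -/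
open scoped ComplexConjugate BigOperators

/-!
The translates act diagonally in the basis `χ`: as `i` varies, `⟪T_i g, f⟫` runs through `√N` times
the coordinates of `∑ l, conj (ĝ l) f̂ l • χ l`, so by Parseval the frame sum is
`N ∑ l (∑ s |ĝ_s l|²) |f̂ l|²`. The best bounds of a diagonal quadratic form are its extreme
diagonal entries, attained at the basis vectors.
-/

open scoped InnerProductSpace

theorem OrthonormalBasis.forall_le_sum_mul_norm_sq_inner_le_iff {ι 𝕜 E : Type*} [Fintype ι]
    [RCLike 𝕜] [NormedAddCommGroup E] [InnerProductSpace 𝕜 E] (b : OrthonormalBasis ι 𝕜 E)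
    (w : ι → ℝ) (A B : ℝ) :
    (∀ x : E, A * ‖x‖ ^ 2 ≤ ∑ i, w i * ‖⟪b i, x⟫_𝕜‖ ^ 2 ∧
      ∑ i, w i * ‖⟪b i, x⟫_𝕜‖ ^ 2 ≤ B * ‖x‖ ^ 2) ↔ ∀ i, A ≤ w i ∧ w i ≤ B := by
  classical
  constructor
  · intro h i
    have hsum : ∑ j, w j * ‖⟪b j, b i⟫_𝕜‖ ^ 2 = w i := by
      simp [b.inner_eq_ite, apply_ite (fun z : 𝕜 => ‖z‖ ^ 2)]
    simpa [hsum] using h (b i)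
  · intro h x
    simp_rw [← b.sum_sq_norm_inner_right x, Finset.mul_sum]
    exact ⟨Finset.sum_le_sum fun i _ => by gcongr; exact (h i).1,
      Finset.sum_le_sum fun i _ => by gcongr; exact (h i).2⟩

theorem OrthonormalBasis.norm_sq_sum_smul {ι 𝕜 E : Type*} [Fintype ι]
    [RCLike 𝕜] [NormedAddCommGroup E] [InnerProductSpace 𝕜 E] (b : OrthonormalBasis ι 𝕜 E)
    (c : ι → 𝕜) : ‖∑ i, c i • b i‖ ^ 2 = ∑ i, ‖c i‖ ^ 2 := by
  rw [← EuclideanSpace.norm_sq_eq (WithLp.toLp 2 c), ← b.repr.symm.norm_map, b.sum_repr_symm]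

lemma EuclideanSpace.sum_mul_conj_eq_inner {ι 𝕜 : Type*} [Fintype ι] [RCLike 𝕜] (f h : EuclideanSpace 𝕜 ι) :
    ∑ n, f n * conj (h n) = ⟪h, f⟫_𝕜 := rfl

section Translation

variable {N : ℕ}

lemma gft_apply (χ : Fin N → EuclideanSpace ℂ (Fin N)) (f : EuclideanSpace ℂ (Fin N)) (l : Fin N) :
    gft χ f l = ⟪χ l, f⟫_ℂ := rfl

lemma gtrans_eq_sum_smul (χ : Fin N → EuclideanSpace ℂ (Fin N)) (i : Fin N)
    (g : EuclideanSpace ℂ (Fin N)) :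
    gtrans χ i g = (Real.sqrt N : ℂ) • ∑ l, (gft χ g l * conj (χ l i)) • χ l := by
  ext n
  simp [gtrans, WithLp.ofLp_sum]

lemma inner_gtrans_eq_apply (χ : Fin N → EuclideanSpace ℂ (Fin N)) (i : Fin N)
    (g f : EuclideanSpace ℂ (Fin N)) :
    ⟪gtrans χ i g, f⟫_ℂ = ((Real.sqrt N : ℂ) • ∑ l, (conj (gft χ g l) * gft χ f l) • χ l) i := by
  rw [gtrans_eq_sum_smul, inner_smul_left, sum_inner]
  simp only [inner_smul_left, map_mul, Complex.conj_ofReal, RingHomCompTriple.comp_apply,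
    RingHom.id_apply, PiLp.smul_apply, WithLp.ofLp_sum, Finset.sum_apply, smul_eq_mul]
  congr 1
  exact Finset.sum_congr rfl fun l _ => by rw [gft_apply χ f]; ring

lemma sum_norm_sq_inner_gtrans (b : OrthonormalBasis (Fin N) ℂ (EuclideanSpace ℂ (Fin N)))
    (g f : EuclideanSpace ℂ (Fin N)) :
    ∑ i, ‖⟪gtrans b i g, f⟫_ℂ‖ ^ 2 = N * ∑ l, ‖gft b g l‖ ^ 2 * ‖gft b f l‖ ^ 2 := by
  simp_rw [inner_gtrans_eq_apply]
  rw [← EuclideanSpace.norm_sq_eq, norm_smul, mul_pow, b.norm_sq_sum_smul]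
  simp [Finset.mul_sum, mul_pow]

end Translation

theorem translates_multi_frame_iff_general {N M : ℕ} (hN : 0 < N)
    (χ : Fin N → EuclideanSpace ℂ (Fin N)) (hχ : Orthonormal ℂ χ)
    (hspan : Submodule.span ℂ (Set.range χ) = ⊤)
    (g : Fin M → EuclideanSpace ℂ (Fin N)) (A B : ℝ) :
    (∀ f : EuclideanSpace ℂ (Fin N),
        A * ‖f‖ ^ 2 ≤ ∑ i : Fin N, ∑ s : Fin M,
            ‖∑ n, f n * conj (gtrans χ i (g s) n)‖ ^ 2 ∧
        ∑ i : Fin N, ∑ s : Fin M,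
            ‖∑ n, f n * conj (gtrans χ i (g s) n)‖ ^ 2 ≤ B * ‖f‖ ^ 2) ↔
    (∀ l : Fin N,
        A / N ≤ ∑ s : Fin M, ‖gft χ (g s) l‖ ^ 2 ∧
        ∑ s : Fin M, ‖gft χ (g s) l‖ ^ 2 ≤ B / N) := by
  set b := OrthonormalBasis.mk hχ hspan.ge
  have hb : ⇑b = χ := OrthonormalBasis.coe_mk _ _
  have hframe : ∀ f : EuclideanSpace ℂ (Fin N),
      ∑ i, ∑ s, ‖∑ n, f n * conj (gtrans χ i (g s) n)‖ ^ 2 =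
        ∑ l, (N * ∑ s, ‖gft χ (g s) l‖ ^ 2) * ‖⟪b l, f⟫_ℂ‖ ^ 2 := by
    intro f
    rw [Finset.sum_comm]
    simp_rw [EuclideanSpace.sum_mul_conj_eq_inner, ← hb, sum_norm_sq_inner_gtrans, gft_apply b f,
      Finset.mul_sum, Finset.sum_mul, mul_assoc]
    exact Finset.sum_comm
  have hN' : (0 : ℝ) < N := Nat.cast_pos.mpr hN
  simp_rw [hframe, b.forall_le_sum_mul_norm_sq_inner_le_iff, div_le_iff₀' hN', le_div_iff₀' hN']

/-- `{T_i g_s : 1 ≤ i ≤ N, 1 ≤ s ≤ M}` is a frame for `ℂ^N` with frame bounds `A, B`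
iff `A/N ≤ ∑_s |ĝ_s(l)|² ≤ B/N` for all `l`. -/
theorem translates_multi_frame_iff {N M : ℕ} (hN : 0 < N)
    (χ : Fin N → EuclideanSpace ℂ (Fin N)) (hχ : Orthonormal ℂ χ)
    (hspan : Submodule.span ℂ (Set.range χ) = ⊤)
    (g : Fin M → EuclideanSpace ℂ (Fin N)) (A B : ℝ) (hA : 0 < A) (hB : 0 < B) :
    (∀ f : EuclideanSpace ℂ (Fin N),
        A * ‖f‖ ^ 2 ≤ ∑ i : Fin N, ∑ s : Fin M,
            ‖∑ n, f n * conj (gtrans χ i (g s) n)‖ ^ 2 ∧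
        ∑ i : Fin N, ∑ s : Fin M,
            ‖∑ n, f n * conj (gtrans χ i (g s) n)‖ ^ 2 ≤ B * ‖f‖ ^ 2) ↔
    (∀ l : Fin N,
        A / N ≤ ∑ s : Fin M, ‖gft χ (g s) l‖ ^ 2 ∧
        ∑ s : Fin M, ‖gft χ (g s) l‖ ^ 2 ≤ B / N) :=
  translates_multi_frame_iff_general hN χ hχ hspan g A B
end

section
/- Let g ∈ ℂ^N and define the frame operator S : ℂ^N → ℂ^N by S f = Σ_{p=1}^N ⟨f, T_p g⟩ · T_p g. Then for every f ∈ ℂ^N and every 1 ≤ l ≤ N, the graph Fourier transform of S f satisfies (S f)^(l) = N · |ĝ(l)|² · f̂(l); consequently S commutes with every generalized translation: S(T_i f) = T_i(S f) for all f ∈ ℂ^N and all 1 ≤ i ≤ N. -/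
open scoped ComplexConjugate BigOperators

/-!
Both the translation `T_i` and the frame operator `S` are graph Fourier multipliers, i.e. of the
form `f ↦ ∑ l, (m l * f̂ l) • χ_l`. For `T_i` the symbol is `√N · conj (χ_l i)`. For `S`, the
coefficient vector `p ↦ ⟨f, T_p g⟩` is the multiplier with symbol `√N · conj ĝ` applied to `f`,
and `∑ p, c p • T_p g` is the multiplier with symbol `√N · ĝ` applied to `c`. By orthonormality,
multipliers compose by multiplying their symbols, so the symbol of `S` is `N |ĝ|²` and any two
multipliers commute.
-/

open Finset

section GraphFourierMultiplier

variable {N : ℕ} {χ : Fin N → EuclideanSpace ℂ (Fin N)}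

theorem gft_apply_eq_inner (χ : Fin N → EuclideanSpace ℂ (Fin N)) (f : EuclideanSpace ℂ (Fin N))
    (l : Fin N) : gft χ f l = inner ℂ (χ l) f := by
  simp [gft, PiLp.inner_apply, RCLike.inner_apply]

noncomputable def gftMultiplier (χ : Fin N → EuclideanSpace ℂ (Fin N)) (m : Fin N → ℂ)
    (f : EuclideanSpace ℂ (Fin N)) : EuclideanSpace ℂ (Fin N) :=
  ∑ l, (m l * gft χ f l) • χ l

theorem gftMultiplier_apply (m : Fin N → ℂ) (f : EuclideanSpace ℂ (Fin N)) (n : Fin N) :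
    gftMultiplier χ m f n = ∑ l, m l * gft χ f l * χ l n := by
  simp [gftMultiplier, WithLp.ofLp_sum]

theorem gft_gftMultiplier (hχ : Orthonormal ℂ χ) (m : Fin N → ℂ)
    (f : EuclideanSpace ℂ (Fin N)) (l : Fin N) :
    gft χ (gftMultiplier χ m f) l = m l * gft χ f l := by
  rw [gft_apply_eq_inner, gftMultiplier, hχ.inner_right_fintype]

theorem gftMultiplier_gftMultiplier (hχ : Orthonormal ℂ χ) (a b : Fin N → ℂ)
    (f : EuclideanSpace ℂ (Fin N)) :
    gftMultiplier χ a (gftMultiplier χ b f) = gftMultiplier χ (a * b) f := by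
  rw [gftMultiplier]
  simp only [gft_gftMultiplier hχ]
  simp only [gftMultiplier, Pi.mul_apply, mul_assoc]

theorem gftMultiplier_comm (hχ : Orthonormal ℂ χ) (a b : Fin N → ℂ)
    (f : EuclideanSpace ℂ (Fin N)) :
    gftMultiplier χ a (gftMultiplier χ b f) = gftMultiplier χ b (gftMultiplier χ a f) := by
  rw [gftMultiplier_gftMultiplier hχ, gftMultiplier_gftMultiplier hχ, mul_comm]

theorem gtrans_eq_gftMultiplier (i : Fin N) (f : EuclideanSpace ℂ (Fin N)) :
    gtrans χ i f = gftMultiplier χ (fun l => Real.sqrt N * conj (χ l i)) f := by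
  ext n
  simp only [gtrans, gftMultiplier_apply, mul_sum]
  exact sum_congr rfl fun l _ => by ring

theorem sum_smul_gtrans (g c : EuclideanSpace ℂ (Fin N)) :
    ∑ p, c p • gtrans χ p g = gftMultiplier χ (fun l => Real.sqrt N * gft χ g l) c := by
  simp only [gtrans_eq_gftMultiplier, gftMultiplier, smul_sum, smul_smul]
  rw [sum_comm]
  refine sum_congr rfl fun l _ => ?_
  rw [← sum_smul, show gft χ c l = ∑ p, c p * conj (χ l p) from rfl, mul_sum]
  exact congrArg (· • χ l) (sum_congr rfl fun p _ => by ring)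

theorem inner_gtrans_left (g f : EuclideanSpace ℂ (Fin N)) :
    WithLp.toLp 2 (fun p => inner ℂ (gtrans χ p g) f) =
      gftMultiplier χ (fun l => Real.sqrt N * conj (gft χ g l)) f := by
  ext p
  rw [gftMultiplier_apply, WithLp.ofLp_toLp, gtrans_eq_gftMultiplier, gftMultiplier, sum_inner]
  simp only [inner_smul_left, ← gft_apply_eq_inner, map_mul, Complex.conj_ofReal,
    RCLike.conj_conj]
  exact sum_congr rfl fun l _ => by ring

noncomputable def frameOperator (χ : Fin N → EuclideanSpace ℂ (Fin N))
    (g f : EuclideanSpace ℂ (Fin N)) : EuclideanSpace ℂ (Fin N) :=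
  ∑ p, inner ℂ (gtrans χ p g) f • gtrans χ p g

theorem frameOperator_apply (g f : EuclideanSpace ℂ (Fin N)) (n : Fin N) :
    frameOperator χ g f n = ∑ p, (∑ n', f n' * conj (gtrans χ p g n')) * gtrans χ p g n := by
  simp [frameOperator, WithLp.ofLp_sum, PiLp.inner_apply, RCLike.inner_apply]

theorem frameOperator_eq_gftMultiplier (hχ : Orthonormal ℂ χ) (g : EuclideanSpace ℂ (Fin N)) :
    frameOperator χ g = gftMultiplier χ (fun l => (N : ℂ) * (‖gft χ g l‖ ^ 2 : ℝ)) := by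
  have hsymbol : (fun l => (Real.sqrt N : ℂ) * gft χ g l) *
      (fun l => Real.sqrt N * conj (gft χ g l)) = fun l => (N : ℂ) * (‖gft χ g l‖ ^ 2 : ℝ) := by
    funext l
    have hsqrt : (Real.sqrt N : ℂ) * Real.sqrt N = N := by
      exact_mod_cast Real.mul_self_sqrt (Nat.cast_nonneg N)
    rw [Pi.mul_apply, Complex.ofReal_pow]
    linear_combination (gft χ g l * conj (gft χ g l)) * hsqrt + N * Complex.mul_conj' (gft χ g l)
  funext f
  show ∑ p, (WithLp.toLp 2 fun p => inner ℂ (gtrans χ p g) f) p • gtrans χ p g = _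
  rw [sum_smul_gtrans, inner_gtrans_left, gftMultiplier_gftMultiplier hχ, hsymbol]

end GraphFourierMultiplier

theorem frame_operator_gft_and_commutes_general {N : ℕ}
    (χ : Fin N → EuclideanSpace ℂ (Fin N)) (hχ : Orthonormal ℂ χ)
    (g : EuclideanSpace ℂ (Fin N))
    (S : EuclideanSpace ℂ (Fin N) → EuclideanSpace ℂ (Fin N))
    (hS : ∀ f : EuclideanSpace ℂ (Fin N), ∀ n : Fin N,
        S f n = ∑ p : Fin N, (∑ n', f n' * conj (gtrans χ p g n')) * gtrans χ p g n) :
    (∀ f : EuclideanSpace ℂ (Fin N), ∀ l : Fin N,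
        gft χ (S f) l = (N : ℂ) * (‖gft χ g l‖ ^ 2 : ℝ) * gft χ f l) ∧
    (∀ f : EuclideanSpace ℂ (Fin N), ∀ i : Fin N,
        S (gtrans χ i f) = gtrans χ i (S f)) := by
  have hS_eq : S = frameOperator χ g := funext fun f => by
    ext n
    rw [hS, frameOperator_apply]
  rw [hS_eq, frameOperator_eq_gftMultiplier hχ]
  refine ⟨fun f l => gft_gftMultiplier hχ _ f l, fun f i => ?_⟩
  rw [gtrans_eq_gftMultiplier, gtrans_eq_gftMultiplier, gftMultiplier_comm hχ]

/-- The frame operator `S f = ∑_p ⟨f, T_p g⟩ · T_p g` satisfies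
`(S f)^(l) = N·|ĝ(l)|²·f̂(l)` and commutes with every generalized translation. -/
theorem frame_operator_gft_and_commutes {N : ℕ} (hN : 0 < N)
    (χ : Fin N → EuclideanSpace ℂ (Fin N)) (hχ : Orthonormal ℂ χ)
    (hspan : Submodule.span ℂ (Set.range χ) = ⊤)
    (g : EuclideanSpace ℂ (Fin N))
    (S : EuclideanSpace ℂ (Fin N) → EuclideanSpace ℂ (Fin N))
    (hS : ∀ f : EuclideanSpace ℂ (Fin N), ∀ n : Fin N,
        S f n = ∑ p : Fin N, (∑ n', f n' * conj (gtrans χ p g n')) * gtrans χ p g n) :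
    (∀ f : EuclideanSpace ℂ (Fin N), ∀ l : Fin N,
        gft χ (S f) l = (N : ℂ) * (‖gft χ g l‖ ^ 2 : ℝ) * gft χ f l) ∧
    (∀ f : EuclideanSpace ℂ (Fin N), ∀ i : Fin N,
        S (gtrans χ i f) = gtrans χ i (S f)) :=
  frame_operator_gft_and_commutes_general χ hχ g S hS
end
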